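/- arXiv:quant-ph/0510187 — 2 statements merged into one kernel-verified Lean document; each statement's English description precedes it below -/
import Mathlib

section
/- Let X, Y be permutationally invariant operators on H^{⊗N} with Tr[X ρ^{⊗N}] = Tr[Y ρ^{⊗N}] for every density operator ρ on H. Then X = Y. -/
open Matrix BigOperators Finset
open scoped ComplexOrder

/-- N-fold tensor power of a matrix (operator on H^{⊗N} with H = ℂ^d). -/
def tensorPow {d N : ℕ} (ρ : Matrix (Fin d) (Fin d) ℂ) :
    Matrix (Fin N → Fin d) (Fin N → Fin d) ℂ :=
  Matrix.of fun f g => ∏ i, ρ (f i) (g i)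

/-- Conjugation Π_σ X Π_σ† of an operator on H^{⊗N} by the unitary permuting tensor factors. -/
def permAction {d N : ℕ} (σ : Equiv.Perm (Fin N))
    (X : Matrix (Fin N → Fin d) (Fin N → Fin d) ℂ) :
    Matrix (Fin N → Fin d) (Fin N → Fin d) ℂ :=
  Matrix.of fun f g => X (f ∘ σ) (g ∘ σ)

/-- Density operator: positive semidefinite with unit trace. -/
def IsDensity {d : ℕ} (ρ : Matrix (Fin d) (Fin d) ℂ) : Prop :=
  ρ.PosSemidef ∧ ρ.trace = 1

/-- A^{(k)} = I^{⊗(k-1)} ⊗ A ⊗ I^{⊗(N-k)}, the observable A acting on the k-th factor. -/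
noncomputable def siteOp {d N : ℕ} (k : Fin N) (A : Matrix (Fin d) (Fin d) ℂ) :
    Matrix (Fin N → Fin d) (Fin N → Fin d) ℂ :=
  Matrix.of fun f g => A (f k) (g k) * ∏ i ∈ Finset.univ.erase k, (if f i = g i then (1 : ℂ) else 0)

/-- Matrix element ⟨ψ₁|⊗⋯⊗⟨ψ_N| X |φ₁⟩⊗⋯⊗|φ_N⟩ on product vectors. -/
noncomputable def prodElem {d N : ℕ} (X : Matrix (Fin N → Fin d) (Fin N → Fin d) ℂ)
    (ψ φ : Fin N → Fin d → ℂ) : ℂ :=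
  ∑ f : Fin N → Fin d, ∑ g : Fin N → Fin d,
    (starRingEnd ℂ) (∏ i, ψ i (f i)) * X f g * ∏ i, φ i (g i)

/-!
Let `T (A₁, …, A_N) = Tr[(X - Y) (A₁ ⊗ ⋯ ⊗ A_N)]`. This is a multilinear form, symmetric because
`X` and `Y` are permutation invariant, and by hypothesis and homogeneity `T (ρ, …, ρ) = 0` for every
positive semidefinite `ρ`. Polarization,
`∑_{s ⊆ [N]} (-1)^{|s|} T (A_{sᶜ}, …, A_{sᶜ}) = N! T (A₁, …, A_N)` with `A_S = ∑_{j ∈ S} A_j`,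
then makes `T` vanish on all tuples of positive semidefinite matrices. These span all matrices, so
`T = 0`, and evaluating `T` at tuples of matrix units recovers the entries of `X - Y`.
-/

theorem Finset.sum_disjoint_neg_one_pow_card {α : Type*} [Fintype α] [DecidableEq α]
    (t : Finset α) :
    ∑ s with Disjoint t s, (-1 : ℤ) ^ #s = if t = univ then 1 else 0 := by
  have : ({s | Disjoint t s} : Finset (Finset α)) = tᶜ.powerset := by
    ext s; simp [Finset.subset_compl_iff_disjoint_left]
  simp [this, Finset.sum_powerset_neg_one_pow_card]

theorem Fintype.sum_surjective_eq_sum_perm {ι β : Type*} [Fintype ι] [DecidableEq ι]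
    [AddCommMonoid β] (g : (ι → ι) → β) :
    ∑ r : ι → ι with r.Surjective, g r = ∑ σ : Equiv.Perm ι, g σ := by
  refine (sum_bij' (fun (σ : Equiv.Perm ι) _ => ⇑σ)
    (fun r hr => Equiv.ofBijective r (mem_filter.mp hr).2.bijective_of_finite) ?_ ?_ ?_ ?_ ?_).symm
  all_goals intros; first | rfl | simp [Equiv.surjective]

namespace MultilinearMap

section Span

variable {R ι W : Type*} {M : ι → Type*} [Finite ι] [Semiring R] [∀ i, AddCommMonoid (M i)]
  [∀ i, Module R (M i)] [AddCommMonoid W] [Module R W]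

theorem eq_zero_of_span_eq_top (f : MultilinearMap R M W) {C : ∀ i, Set (M i)}
    (hC : ∀ i, Submodule.span R (C i) = ⊤) (hf : ∀ m, (∀ i, m i ∈ C i) → f m = 0) : f = 0 := by
  classical
  have := Fintype.ofFinite ι
  suffices ∀ s : Finset ι, ∀ m, (∀ i ∉ s, m i ∈ C i) → f m = 0 from
    ext fun m => this univ m (by simp)
  intro s
  induction s using Finset.induction_on with
  | empty => simpa using hf
  | insert i s _ ih =>
    intro m hm
    have hupdate : ∀ x ∈ Submodule.span R (C i), f (Function.update m i x) = 0 := by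
      intro x hx
      induction hx using Submodule.span_induction with
      | mem x hx =>
        refine ih _ fun j hj => ?_
        rcases eq_or_ne j i with rfl | hji
        · simpa using hx
        · simpa [hji] using hm j (by simp [hji, hj])
      | zero => exact f.map_update_zero m i
      | add x y _ _ hx hy => rw [f.map_update_add, hx, hy, add_zero]
      | smul c x _ hx => rw [f.map_update_smul, hx, smul_zero]
    simpa using hupdate (m i) (by simp [hC i])

end Span

section Polarization

variable {R M W ι : Type*} [Fintype ι] [DecidableEq ι] [Semiring R] [AddCommMonoid M]
  [Module R M] [AddCommGroup W] [Module R W]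

theorem sum_neg_one_pow_smul_map_diag (f : MultilinearMap R (fun _ : ι => M) W) (m : ι → M) :
    ∑ s : Finset ι, (-1 : ℤ) ^ #s • f (fun _ => ∑ j ∈ sᶜ, m j) =
      ∑ r : ι → ι with r.Surjective, f (m ∘ r) := by
  have hdisj : ∀ (r : ι → ι) (s : Finset ι), Disjoint (univ.image r) s ↔ ∀ i, r i ∈ sᶜ := by
    simp [Finset.disjoint_left]
  have hsurj : ∀ r : ι → ι, univ.image r = univ ↔ r.Surjective := by
    simp [Finset.eq_univ_iff_forall, Function.Surjective]
  calc ∑ s : Finset ι, (-1 : ℤ) ^ #s • f (fun _ => ∑ j ∈ sᶜ, m j)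
      = ∑ s : Finset ι, ∑ r : ι → ι, if ∀ i, r i ∈ sᶜ then (-1 : ℤ) ^ #s • f (m ∘ r) else 0 := by
        refine sum_congr rfl fun s _ => ?_
        rw [f.map_sum_finset, smul_sum, ← sum_filter]
        congr 1; ext r; simp [Fintype.mem_piFinset]
    _ = ∑ r : ι → ι, (∑ s with Disjoint (univ.image r) s, (-1 : ℤ) ^ #s) • f (m ∘ r) := by
        rw [sum_comm]
        simp_rw [sum_smul, sum_filter, hdisj]
    _ = ∑ r : ι → ι with r.Surjective, f (m ∘ r) := by
        simp_rw [Finset.sum_disjoint_neg_one_pow_card, hsurj, ite_smul, one_smul, zero_smul,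
          sum_filter]

theorem map_eq_zero_of_map_diag_sum_eq_zero [IsAddTorsionFree W]
    (f : MultilinearMap R (fun _ : ι => M) W) (hf : ∀ (σ : Equiv.Perm ι) m, f (m ∘ σ) = f m)
    (m : ι → M) (h : ∀ s : Finset ι, f (fun _ => ∑ j ∈ s, m j) = 0) : f m = 0 := by
  have : (Fintype.card ι).factorial • f m = 0 :=
    calc (Fintype.card ι).factorial • f m = ∑ σ : Equiv.Perm ι, f (m ∘ σ) := by
          simp [hf, Fintype.card_perm]
      _ = ∑ r : ι → ι with r.Surjective, f (m ∘ r) :=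
          (Fintype.sum_surjective_eq_sum_perm fun r => f (m ∘ r)).symm
      _ = ∑ s : Finset ι, (-1 : ℤ) ^ #s • f (fun _ => ∑ j ∈ sᶜ, m j) :=
          (sum_neg_one_pow_smul_map_diag f m).symm
      _ = 0 := by simp [h]
  exact (nsmul_eq_zero_iff_right (Nat.factorial_ne_zero _)).mp this

end Polarization

end MultilinearMap

section TensorTraceForm

variable {ι n R : Type*} [Fintype ι] [DecidableEq ι] [Fintype n] [CommSemiring R]

noncomputable def tensorTraceForm (Z : Matrix (ι → n) (ι → n) R) :
    MultilinearMap R (fun _ : ι => Matrix n n R) R :=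
  ∑ f : ι → n, ∑ g : ι → n, Z f g •
    (MultilinearMap.mkPiAlgebra R ι R).compLinearMap fun i => entryLinearMap R R (g i) (f i)

theorem tensorTraceForm_apply (Z : Matrix (ι → n) (ι → n) R) (A : ι → Matrix n n R) :
    tensorTraceForm Z A = ∑ f : ι → n, ∑ g : ι → n, Z f g * ∏ i, A i (g i) (f i) := by
  simp [tensorTraceForm]

theorem tensorTraceForm_single [DecidableEq n] (Z : Matrix (ι → n) (ι → n) R) (f g : ι → n) :
    tensorTraceForm Z (fun i => single (g i) (f i) 1) = Z f g := by
  have hunit (f' g' : ι → n) :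
      ∏ i, single (g i) (f i) (1 : R) (g' i) (f' i) = if f' = f ∧ g' = g then 1 else 0 := by
    simp [single_apply, Finset.prod_boole, funext_iff, forall_and, eq_comm, and_comm]
  simp [tensorTraceForm_apply, hunit, ite_and]

theorem tensorTraceForm_injective :
    Function.Injective (tensorTraceForm : Matrix (ι → n) (ι → n) R → _) := by
  classical
  intro Z Z' h
  ext f g
  rw [← tensorTraceForm_single Z, ← tensorTraceForm_single Z', h]

end TensorTraceForm

theorem trace_mul_tensorPow {d N : ℕ} (Z : Matrix (Fin N → Fin d) (Fin N → Fin d) ℂ)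
    (ρ : Matrix (Fin d) (Fin d) ℂ) :
    (Z * tensorPow ρ).trace = tensorTraceForm Z (fun _ => ρ) := by
  simp [Matrix.trace, Matrix.mul_apply, tensorPow, tensorTraceForm_apply]

theorem tensorTraceForm_comp_perm {d N : ℕ} {Z : Matrix (Fin N → Fin d) (Fin N → Fin d) ℂ}
    {σ : Equiv.Perm (Fin N)} (hZ : permAction σ Z = Z) (A : Fin N → Matrix (Fin d) (Fin d) ℂ) :
    tensorTraceForm Z (A ∘ σ) = tensorTraceForm Z A := by
  let e : (Fin N → Fin d) ≃ (Fin N → Fin d) := σ.symm.arrowCongr (Equiv.refl _)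
  simp only [tensorTraceForm_apply]
  rw [← e.sum_comp]
  refine sum_congr rfl fun f _ => ?_
  rw [← e.sum_comp]
  refine sum_congr rfl fun g _ => ?_
  have hfg : Z (f ∘ σ) (g ∘ σ) = Z f g := congr_fun (congr_fun hZ f) g
  change Z (f ∘ σ) (g ∘ σ) * ∏ i, A (σ i) (g (σ i)) (f (σ i)) = _
  rw [hfg, Equiv.prod_comp σ fun i => A i (g i) (f i)]

theorem span_posSemidef {n : Type*} [Fintype n] [DecidableEq n] :
    Submodule.span ℂ {A : Matrix n n ℂ | A.PosSemidef} = ⊤ := by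
  open scoped MatrixOrder in
  simpa only [nonneg_iff_posSemidef] using CStarAlgebra.span_nonneg (A := Matrix n n ℂ)

theorem MultilinearMap.map_diag_eq_zero_of_posSemidef {ι W : Type*} [Nonempty ι] [Fintype ι]
    [AddCommGroup W] [Module ℂ W] {d : ℕ}
    (f : MultilinearMap ℂ (fun _ : ι => Matrix (Fin d) (Fin d) ℂ) W)
    (hf : ∀ ρ, IsDensity ρ → f (fun _ => ρ) = 0) {ρ : Matrix (Fin d) (Fin d) ℂ}
    (hρ : ρ.PosSemidef) : f (fun _ => ρ) = 0 := by
  obtain ht | ht := eq_or_ne ρ.trace 0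
  · rw [hρ.trace_eq_zero_iff.mp ht]
    exact f.map_coord_zero (Classical.arbitrary ι) rfl
  have hdens : IsDensity (ρ.trace⁻¹ • ρ) :=
    ⟨hρ.smul (inv_nonneg.mpr hρ.trace_nonneg), by rw [trace_smul, smul_eq_mul, inv_mul_cancel₀ ht]⟩
  calc f (fun _ => ρ) = f (fun _ => ρ.trace • ρ.trace⁻¹ • ρ) := by rw [smul_inv_smul₀ ht]
    _ = ρ.trace ^ Fintype.card ι • f (fun _ => ρ.trace⁻¹ • ρ) := by
        rw [f.map_smul_univ, prod_const, card_univ]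
    _ = 0 := by rw [hf _ hdens, smul_zero]

/-- Two permutationally invariant operators with the same ensemble averages
on all product states ρ^{⊗N} coincide. -/
theorem perm_invariant_eq_of_averages_eq
    {d N : ℕ} (hN : 0 < N)
    (X Y : Matrix (Fin N → Fin d) (Fin N → Fin d) ℂ)
    (hinvX : ∀ σ : Equiv.Perm (Fin N), permAction σ X = X)
    (hinvY : ∀ σ : Equiv.Perm (Fin N), permAction σ Y = Y)
    (h : ∀ ρ : Matrix (Fin d) (Fin d) ℂ, IsDensity ρ →
      (X * tensorPow ρ).trace = (Y * tensorPow ρ).trace) :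
    X = Y := by
  have : Nonempty (Fin N) := ⟨⟨0, hN⟩⟩
  set T := tensorTraceForm X - tensorTraceForm Y
  have hT_perm : ∀ (σ : Equiv.Perm (Fin N)) A, T (A ∘ σ) = T A := fun σ A => by
    simp [T, tensorTraceForm_comp_perm (hinvX σ), tensorTraceForm_comp_perm (hinvY σ)]
  have hT_psd : ∀ ρ : Matrix (Fin d) (Fin d) ℂ, ρ.PosSemidef → T (fun _ => ρ) = 0 :=
    fun ρ hρ => T.map_diag_eq_zero_of_posSemidef
      (fun ρ hρ => by simp [T, ← trace_mul_tensorPow, h ρ hρ]) hρ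
  have hT : T = 0 := T.eq_zero_of_span_eq_top (fun _ => span_posSemidef) fun A hA =>
    T.map_eq_zero_of_map_diag_sum_eq_zero hT_perm A fun s =>
      hT_psd _ (posSemidef_sum s fun j _ => hA j)
  exact tensorTraceForm_injective (sub_eq_zero.mp hT)
end

section
/- For a single copy (N = 1), any finite POVM {P_i} with outcomes r_i on H that is unbiased for the Hermitian observable A (∑_i r_i Tr[P_i ρ] = Tr[Aρ] for all density operators ρ) has variance ∑_i r_i² Tr[P_i ρ] − (Tr[Aρ])² ≥ Tr[A²ρ] − (Tr[Aρ])² for every density operator ρ, with equality achieved by the spectral measurement of A. -/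
/-!
Testing unbiasedness on the pure eigenstates of the Hermitian operator `∑ rᵢ Pᵢ - A` forces
`∑ rᵢ Pᵢ = A`. Together with `∑ Pᵢ = 1` this gives
`∑ rᵢ² Pᵢ - A² = ∑ (rᵢ - A) Pᵢ (rᵢ - A)`, a positive semidefinite operator, whose expectation in
`ρ` is the excess of the variance over `Tr[A²ρ] - Tr[Aρ]²`. Conversely, writing
`A = U diag(λ) U*`, the projections `Qᵢ = U Eᵢᵢ U*` are complete and orthogonal with
`∑ λᵢ Qᵢ = A` and `∑ λᵢ² Qᵢ = A²`, so this measurement attains the bound.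
-/

open Matrix BigOperators Finset
open scoped ComplexOrder

open Unitary

theorem sum_sub_mul_mul_sub_eq {R S ι : Type*} [Ring R] [CommRing S] [Algebra S R] [Fintype ι]
    {p : ι → R} {r : ι → S} {a : R} (hp : ∑ i, p i = 1) (ha : ∑ i, r i • p i = a) :
    ∑ i, (r i • 1 - a) * p i * (r i • 1 - a) = ∑ i, r i ^ 2 • p i - a * a := by
  have expand : ∀ i, (r i • 1 - a) * p i * (r i • 1 - a) =
      r i ^ 2 • p i - r i • (p i * a) - r i • (a * p i) + a * p i * a := fun i ↦ by
    simp only [sub_mul, mul_sub, smul_mul_assoc, mul_smul_comm, one_mul, mul_one, smul_sub,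
      smul_smul, pow_two]
    abel
  have hpa : ∑ i, r i • (p i * a) = a * a := by
    simp only [← smul_mul_assoc, ← Finset.sum_mul, ha]
  have hap : ∑ i, r i • (a * p i) = a * a := by
    simp only [← mul_smul_comm, ← Finset.mul_sum, ha]
  have hapa : ∑ i, a * p i * a = a * a := by
    rw [← Finset.sum_mul, ← Finset.mul_sum, hp, mul_one]
  simp only [expand, Finset.sum_add_distrib, Finset.sum_sub_distrib, hpa, hap, hapa]
  abel

namespace Matrix

theorem trace_sum_smul_mul {n ι R : Type*} [Fintype n] [Fintype ι] [CommSemiring R]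
    (c : ι → R) (P : ι → Matrix n n R) (ρ : Matrix n n R) :
    ((∑ i, c i • P i) * ρ).trace = ∑ i, c i * (P i * ρ).trace := by
  simp only [Finset.sum_mul, trace_sum, smul_mul_assoc, trace_smul, smul_eq_mul]

theorem re_trace_sum_ofReal_smul_mul {n ι : Type*} [Fintype n] [Fintype ι]
    (c : ι → ℝ) (P : ι → Matrix n n ℂ) (ρ : Matrix n n ℂ) :
    ((∑ i, (c i : ℂ) • P i) * ρ).trace.re = ∑ i, c i * (P i * ρ).trace.re := by
  simp only [trace_sum_smul_mul, Complex.re_sum, Complex.re_ofReal_mul]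

open scoped MatrixOrder in
theorem PosSemidef.trace_mul_nonneg {n 𝕜 : Type*} [Fintype n] [RCLike 𝕜] {A B : Matrix n n 𝕜}
    (hA : A.PosSemidef) (hB : B.PosSemidef) : 0 ≤ (A * B).trace := by
  classical
  obtain ⟨C, rfl⟩ := CStarAlgebra.nonneg_iff_eq_star_mul_self.mp hA.nonneg
  rw [Matrix.mul_assoc, Matrix.trace_mul_comm]
  exact (hB.mul_mul_conjTranspose_same C).trace_nonneg

theorem isDensity_vecMulVec {d : ℕ} {v : Fin d → ℂ} (hv : star v ⬝ᵥ v = 1) :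
    IsDensity (vecMulVec v (star v)) :=
  ⟨posSemidef_vecMulVec_self_star v, by rw [trace_vecMulVec, dotProduct_comm, hv]⟩

theorem IsHermitian.eq_zero_of_forall_isDensity {d : ℕ} {M : Matrix (Fin d) (Fin d) ℂ}
    (hM : M.IsHermitian) (h : ∀ ρ, IsDensity ρ → (M * ρ).trace = 0) : M = 0 := by
  rw [← hM.eigenvalues_eq_zero_iff]
  ext i
  have hv : star ⇑(hM.eigenvectorBasis i) ⬝ᵥ ⇑(hM.eigenvectorBasis i) = 1 := by
    rw [dotProduct_comm, ← EuclideanSpace.inner_eq_star_dotProduct, inner_self_eq_norm_sq_to_K,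
      hM.eigenvectorBasis.orthonormal.1 i]
    simp
  have hexpect := h _ (isDensity_vecMulVec hv)
  rw [mul_vecMulVec, trace_vecMulVec, dotProduct_comm] at hexpect
  rw [hM.eigenvalues_eq, hexpect]
  simp

namespace IsHermitian

variable {n 𝕜 : Type*} [Fintype n] [DecidableEq n] [RCLike 𝕜] {A : Matrix n n 𝕜}
  (hA : A.IsHermitian)

/-- Rank-one projection onto the `i`-th eigenvector: for repeated eigenvalues these refine the
spectral projection-valued measure of `A` without changing its outcome statistics. -/
noncomputable def eigenprojection (i : n) : Matrix n n 𝕜 :=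
  conjStarAlgAut 𝕜 _ hA.eigenvectorUnitary (diagonal (Pi.single i 1))

theorem completeOrthogonalIdempotents_eigenprojection :
    CompleteOrthogonalIdempotents hA.eigenprojection :=
  ((CompleteOrthogonalIdempotents.single fun _ : n ↦ 𝕜).map (diagonalRingHom n 𝕜)).map
    (conjStarAlgAut 𝕜 _ hA.eigenvectorUnitary : Matrix n n 𝕜 →+* Matrix n n 𝕜)

theorem isHermitian_eigenprojection (i : n) : (hA.eigenprojection i).IsHermitian := by
  have hD : (diagonal (Pi.single i (1 : 𝕜))).IsHermitian :=
    isHermitian_diagonal_of_self_adjoint _ (by simp [IsSelfAdjoint, Pi.star_single])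
  exact (isHermitian_iff_isSelfAdjoint.mp hD).map (conjStarAlgAut 𝕜 _ hA.eigenvectorUnitary)

theorem sum_smul_eigenprojection (f : n → ℝ) :
    ∑ i, (f i : 𝕜) • hA.eigenprojection i =
      conjStarAlgAut 𝕜 _ hA.eigenvectorUnitary (diagonal (RCLike.ofReal ∘ f)) := by
  simp only [eigenprojection, ← map_smul, ← map_sum]
  congr 1
  ext j k
  rw [Matrix.sum_apply]
  simp only [smul_apply, diagonal_apply, Pi.single_apply]
  by_cases hjk : j = k <;> simp [hjk]

theorem eq_sum_eigenvalues_smul_eigenprojection :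
    A = ∑ i, (hA.eigenvalues i : 𝕜) • hA.eigenprojection i := by
  rw [sum_smul_eigenprojection]
  exact hA.spectral_theorem

theorem mul_self_eq_sum_eigenvalues_sq_smul_eigenprojection :
    A * A = ∑ i, ((hA.eigenvalues i ^ 2 : ℝ) : 𝕜) • hA.eigenprojection i := by
  conv_lhs => rw [hA.spectral_theorem, ← map_mul, diagonal_mul_diagonal]
  rw [sum_smul_eigenprojection]
  congr 2
  ext i
  simp [pow_two]

end IsHermitian

end Matrix

section UnbiasedMeasurement

variable {d : ℕ} {ι : Type*} [Fintype ι] {A : Matrix (Fin d) (Fin d) ℂ}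
  {P : ι → Matrix (Fin d) (Fin d) ℂ} {r : ι → ℝ}

theorem sum_smul_eq_of_forall_isDensity (hA : A.IsHermitian) (hP : ∀ i, (P i).IsHermitian)
    (hunb : ∀ ρ, IsDensity ρ → ∑ i, (r i : ℂ) * (P i * ρ).trace = (A * ρ).trace) :
    ∑ i, (r i : ℂ) • P i = A := by
  have hM : (∑ i, (r i : ℂ) • P i - A).IsHermitian := by
    refine IsHermitian.sub ?_ hA
    exact isSelfAdjoint_sum _ fun i _ ↦
      (hP i).smul (show IsSelfAdjoint (r i : ℂ) from Complex.conj_ofReal _)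
  refine sub_eq_zero.mp (hM.eq_zero_of_forall_isDensity fun ρ hρ ↦ ?_)
  rw [sub_mul, trace_sub, trace_sum_smul_mul, hunb ρ hρ, sub_self]

theorem re_trace_mul_self_mul_le (hA : A.IsHermitian) (hP : ∀ i, (P i).PosSemidef)
    (hPsum : ∑ i, P i = 1)
    (hunb : ∀ ρ, IsDensity ρ → ∑ i, (r i : ℂ) * (P i * ρ).trace = (A * ρ).trace)
    {ρ : Matrix (Fin d) (Fin d) ℂ} (hρ : IsDensity ρ) :
    (A * A * ρ).trace.re ≤ ∑ i, r i ^ 2 * (P i * ρ).trace.re := by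
  have hmean := sum_smul_eq_of_forall_isDensity hA (fun i ↦ (hP i).isHermitian) hunb
  have hX : ∀ i, ((r i : ℂ) • 1 - A).IsHermitian := fun i ↦
    (isHermitian_one.smul (show IsSelfAdjoint (r i : ℂ) from Complex.conj_ofReal _)).sub hA
  have hpsd : ∀ i, (((r i : ℂ) • 1 - A) * P i * ((r i : ℂ) • 1 - A)).PosSemidef := fun i ↦ by
    have := (hP i).mul_mul_conjTranspose_same ((r i : ℂ) • 1 - A)
    rwa [(hX i).eq] at this
  have hgap : 0 ≤ ((∑ i, ((r i ^ 2 : ℝ) : ℂ) • P i - A * A) * ρ).trace := by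
    simp only [Complex.ofReal_pow, ← sum_sub_mul_mul_sub_eq hPsum hmean, Finset.sum_mul,
      trace_sum]
    exact Finset.sum_nonneg fun i _ ↦ (hpsd i).trace_mul_nonneg hρ.1
  rw [sub_mul, trace_sub, Complex.nonneg_iff, Complex.sub_re, re_trace_sum_ofReal_smul_mul]
    at hgap
  linarith [hgap.1]

end UnbiasedMeasurement

/-- Single-copy case: any finite POVM unbiased for a Hermitian A has variance
at least Tr[A²ρ] − (Tr[Aρ])², with equality achieved by the spectral measurement of A. -/
theorem single_copy_optimal
    {d : ℕ} (A : Matrix (Fin d) (Fin d) ℂ) (hA : A.IsHermitian) :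
    (∀ (ι : Type) (_ : Fintype ι) (P : ι → Matrix (Fin d) (Fin d) ℂ) (r : ι → ℝ),
      (∀ i, (P i).PosSemidef) → (∑ i, P i = 1) →
      (∀ ρ : Matrix (Fin d) (Fin d) ℂ, IsDensity ρ →
        ∑ i, (r i : ℂ) * (P i * ρ).trace = (A * ρ).trace) →
      ∀ ρ : Matrix (Fin d) (Fin d) ℂ, IsDensity ρ →
        (∑ i, (r i) ^ 2 * ((P i * ρ).trace).re) - (((A * ρ).trace).re) ^ 2 ≥
          ((A * A * ρ).trace).re - (((A * ρ).trace).re) ^ 2) ∧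
    (∃ (n : ℕ) (Q : Fin n → Matrix (Fin d) (Fin d) ℂ) (s : Fin n → ℝ),
      (∀ i, (Q i).IsHermitian ∧ Q i * Q i = Q i) ∧
      (∀ i j, i ≠ j → Q i * Q j = 0) ∧
      (∑ i, Q i = 1) ∧
      (A = ∑ i, (s i : ℂ) • Q i) ∧
      (∀ ρ : Matrix (Fin d) (Fin d) ℂ, IsDensity ρ →
        ∑ i, (s i : ℂ) * (Q i * ρ).trace = (A * ρ).trace) ∧
      (∀ ρ : Matrix (Fin d) (Fin d) ℂ, IsDensity ρ →
        (∑ i, (s i) ^ 2 * ((Q i * ρ).trace).re) - (((A * ρ).trace).re) ^ 2 =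
          ((A * A * ρ).trace).re - (((A * ρ).trace).re) ^ 2)) := by
  refine ⟨fun ι _ P r hP hPsum hunb ρ hρ ↦
    sub_le_sub_right (re_trace_mul_self_mul_le hA hP hPsum hunb hρ) _, ?_⟩
  have hQ := hA.completeOrthogonalIdempotents_eigenprojection
  refine ⟨d, hA.eigenprojection, hA.eigenvalues,
    fun i ↦ ⟨hA.isHermitian_eigenprojection i, hQ.idem i⟩, fun i j hij ↦ hQ.ortho hij,
    hQ.complete, hA.eq_sum_eigenvalues_smul_eigenprojection, fun ρ _ ↦ ?_, fun ρ _ ↦ ?_⟩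
  · rw [← trace_sum_smul_mul, ← RCLike.ofReal_eq_complex_ofReal,
      ← hA.eq_sum_eigenvalues_smul_eigenprojection]
  · rw [hA.mul_self_eq_sum_eigenvalues_sq_smul_eigenprojection, RCLike.ofReal_eq_complex_ofReal,
      re_trace_sum_ofReal_smul_mul]
end
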